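/- arXiv:1308.6388 — 5 statements merged into one kernel-verified Lean document; each statement's English description precedes it below -/
import Mathlib

section
/- Let M ≤ N be positive integers, let F : ℝ^{M×N} → ℝ be any function, and let λ_min < 0 < λ_max be real numbers. Define the convex-concave family F_v(X) = F(X) − λ_min·(tr(XᵀX) − tr(JX)) and F_c(X) = F(X) − λ_max·(tr(XᵀX) − tr(JX)), and set ζ_u = λ_min/(λ_min − 1) and ζ_l = −λ_max/(λ_max + 1). Then for every ζ with ζ_l ≤ ζ ≤ ζ_u there exists η ∈ [0,1] such that the set of minimizers over Ω of F_ζ coincides with the set of minimizers over Ω of the function X ↦ (1−η)·F_v(X) + η·F_c(X). (Theorem 1: GNCGCP realizes a convex-concave relaxation procedure.) -/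
open Matrix BigOperators

/-!
On `Ω` every row of `X` sums to one, so `tr(JX) = M` is constant and each member
`F - λ (tr(XᵀX) - tr(JX))` of the convex-concave family equals `F - λ tr(XᵀX)` up to an additive
constant. Also `F_ζ = (1 - |ζ|) (F - λ tr(XᵀX))` with `λ = -ζ / (1 - |ζ|)`, and the bounds
`ζ_l ≤ ζ ≤ ζ_u` are exactly `λ_min ≤ λ ≤ λ_max`. Writing `λ = (1 - η) λ_min + η λ_max`, the two
objectives differ on `Ω` by a positive factor and an additive constant, so they have the same
minimizers.
-/

/-- The set Ω of M×N doubly sub-stochastic matrices with unit row sums. -/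
def Omega (M N : ℕ) : Set (Matrix (Fin M) (Fin N) ℝ) :=
  {X | (∀ i j, 0 ≤ X i j) ∧ (∀ i, ∑ j, X i j = 1) ∧ (∀ j, ∑ i, X i j ≤ 1)}

/-- The N×M all-ones matrix J. -/
def Jmat (M N : ℕ) : Matrix (Fin N) (Fin M) ℝ := fun _ _ => 1

/-- The GNCGCP objective F_ζ. -/
noncomputable def Fzeta {M N : ℕ} (F : Matrix (Fin M) (Fin N) ℝ → ℝ) (ζ : ℝ)
    (X : Matrix (Fin M) (Fin N) ℝ) : ℝ :=
  if 0 ≤ ζ then (1 - ζ) * F X + ζ * (Xᵀ * X).trace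
  else (1 + ζ) * F X + ζ * (Xᵀ * X).trace

/-- Set of minimizers of `G` over `S`. -/
def minimizersOn {E : Type*} (S : Set E) (G : E → ℝ) : Set E :=
  {X ∈ S | ∀ Y ∈ S, G X ≤ G Y}

theorem minimizersOn_eq_of_eq_mul_add {E : Type*} {S : Set E} {G₁ G₂ : E → ℝ} {c d : ℝ}
    (hc : 0 < c) (h : ∀ X ∈ S, G₁ X = c * G₂ X + d) :
    minimizersOn S G₁ = minimizersOn S G₂ := by
  ext X
  refine and_congr_right fun hX => forall₂_congr fun Y hY => ?_
  rw [h X hX, h Y hY, add_le_add_iff_right, mul_le_mul_iff_right₀ hc]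

theorem trace_Jmat_mul_of_row_sum_eq_one {M N : ℕ} {X : Matrix (Fin M) (Fin N) ℝ}
    (h : ∀ i, ∑ j, X i j = 1) : (Jmat M N * X).trace = M := by
  simp only [Matrix.trace, Matrix.diag, Matrix.mul_apply, Jmat, one_mul]
  rw [Finset.sum_comm]
  simp [h]

theorem Fzeta_eq_one_sub_abs_mul_add {M N : ℕ} (F : Matrix (Fin M) (Fin N) ℝ → ℝ) (ζ : ℝ)
    (X : Matrix (Fin M) (Fin N) ℝ) :
    Fzeta F ζ X = (1 - |ζ|) * F X + ζ * (Xᵀ * X).trace := by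
  rcases le_or_gt 0 ζ with h | h
  · simp [Fzeta, h, abs_of_nonneg h]
  · simp [Fzeta, not_le.2 h, abs_of_neg h]

section ZetaBounds

variable {lmin lmax ζ : ℝ}

theorem abs_lt_one_of_zeta_bounds (hmin : lmin < 0) (hmax : 0 < lmax)
    (hζl : -lmax / (lmax + 1) ≤ ζ) (hζu : ζ ≤ lmin / (lmin - 1)) : |ζ| < 1 := by
  rw [abs_lt]
  constructor
  · calc -1 < -lmax / (lmax + 1) := by
          rw [lt_div_iff₀ (by linarith)]; linarith
      _ ≤ ζ := hζl
  · calc ζ ≤ lmin / (lmin - 1) := hζu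
      _ < 1 := by rw [div_lt_one_of_neg (by linarith)]; linarith

/-- `ζ ↦ -ζ / (1 - |ζ|)` is a decreasing bijection `(-1, 1) → ℝ`, inverse to
`λ ↦ λ / (λ - 1)` on `λ < 0` and to `λ ↦ -λ / (λ + 1)` on `λ ≥ 0`. -/
theorem neg_div_one_sub_abs_mem_Icc (hmin : lmin < 0) (hmax : 0 < lmax)
    (hζl : -lmax / (lmax + 1) ≤ ζ) (hζu : ζ ≤ lmin / (lmin - 1)) :
    -ζ / (1 - |ζ|) ∈ Set.Icc lmin lmax := by
  have hc : 0 < 1 - |ζ| := sub_pos.2 (abs_lt_one_of_zeta_bounds hmin hmax hζl hζu)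
  rcases le_or_gt 0 ζ with h | h
  · rw [abs_of_nonneg h] at hc ⊢
    rw [le_div_iff_of_neg (by linarith)] at hζu
    refine ⟨by rw [le_div_iff₀ hc]; linarith, ?_⟩
    exact (div_nonpos_of_nonpos_of_nonneg (by linarith) hc.le).trans hmax.le
  · rw [abs_of_neg h] at hc ⊢
    rw [div_le_iff₀ (by linarith)] at hζl
    refine ⟨hmin.le.trans (div_nonneg (by linarith) hc.le), ?_⟩
    rw [div_le_iff₀ hc]; linarith

end ZetaBounds

theorem gncgcp_realizes_ccrp_general (M N : ℕ)
    (F : Matrix (Fin M) (Fin N) ℝ → ℝ) (lmin lmax : ℝ)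
    (hmin : lmin < 0) (hmax : 0 < lmax)
    (Fv Fc : Matrix (Fin M) (Fin N) ℝ → ℝ)
    (hFv : ∀ X, Fv X = F X - lmin * ((Xᵀ * X).trace - (Jmat M N * X).trace))
    (hFc : ∀ X, Fc X = F X - lmax * ((Xᵀ * X).trace - (Jmat M N * X).trace))
    (ζ : ℝ) (hζl : -lmax / (lmax + 1) ≤ ζ) (hζu : ζ ≤ lmin / (lmin - 1)) :
    ∃ η : ℝ, 0 ≤ η ∧ η ≤ 1 ∧
      minimizersOn (Omega M N) (Fzeta F ζ) =
        minimizersOn (Omega M N) (fun X => (1 - η) * Fv X + η * Fc X) := by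
  have hc : 0 < 1 - |ζ| := sub_pos.2 (abs_lt_one_of_zeta_bounds hmin hmax hζl hζu)
  obtain ⟨a, η, ha, hη, hsum, hlam⟩ := (Convex.mem_Icc (hmin.trans hmax).le).1
    (neg_div_one_sub_abs_mem_Icc hmin hmax hζl hζu)
  obtain rfl : a = 1 - η := by linarith
  refine ⟨η, hη, by linarith, minimizersOn_eq_of_eq_mul_add hc (d := ζ * M) fun X hX => ?_⟩
  have hJ := trace_Jmat_mul_of_row_sum_eq_one hX.2.1
  rw [eq_div_iff hc.ne'] at hlam
  rw [Fzeta_eq_one_sub_abs_mul_add, hFv, hFc, hJ]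
  linear_combination ((Xᵀ * X).trace - M) * hlam

/-- Theorem 1: GNCGCP realizes a convex-concave relaxation procedure. -/
theorem gncgcp_realizes_ccrp (M N : ℕ) (hM : 0 < M) (hMN : M ≤ N)
    (F : Matrix (Fin M) (Fin N) ℝ → ℝ) (lmin lmax : ℝ)
    (hmin : lmin < 0) (hmax : 0 < lmax)
    (Fv Fc : Matrix (Fin M) (Fin N) ℝ → ℝ)
    (hFv : ∀ X, Fv X = F X - lmin * ((Xᵀ * X).trace - (Jmat M N * X).trace))
    (hFc : ∀ X, Fc X = F X - lmax * ((Xᵀ * X).trace - (Jmat M N * X).trace))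
    (ζ : ℝ) (hζl : -lmax / (lmax + 1) ≤ ζ) (hζu : ζ ≤ lmin / (lmin - 1)) :
    ∃ η : ℝ, 0 ≤ η ∧ η ≤ 1 ∧
      minimizersOn (Omega M N) (Fzeta F ζ) =
        minimizersOn (Omega M N) (fun X => (1 - η) * Fv X + η * Fc X) :=
  gncgcp_realizes_ccrp_general M N F lmin lmax hmin hmax Fv Fc hFv hFc ζ hζl hζu
end

section
/- Let H be a real symmetric n×n matrix whose largest eigenvalue λ_max is positive. Then ζ_l := −λ_max/(λ_max + 1) lies in the open interval (−1,0), and for every ζ with −1 ≤ ζ ≤ ζ_l the matrix (1+ζ)·H + ζ·I is negative semidefinite. (Matrix form of Proposition 2.) -/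
/-!
All eigenvalues of `H` are at most `λ_max`, so `λ_max • 1 - H` is positive semidefinite, and
`-((1 + ζ) • H + ζ • 1) = (1 + ζ) • (λ_max • 1 - H) - ((1 + ζ) * λ_max + ζ) • 1`
is a nonnegative combination of positive semidefinite matrices exactly when `-1 ≤ ζ ≤ ζ_l`.
-/

open Matrix
open scoped ComplexOrder Pointwise

namespace Matrix

variable {n 𝕜 : Type*} [Fintype n] [DecidableEq n] [RCLike 𝕜] {H : Matrix n n 𝕜}

theorem IsHermitian.posSemidef_smul_one_sub {c : ℝ} (hH : H.IsHermitian)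
    (h : ∀ i, hH.eigenvalues i ≤ c) : (c • 1 - H).PosSemidef := by
  have hC : (c • 1 - H).IsHermitian := (isHermitian_one.smul (IsSelfAdjoint.all c)).sub hH
  refine hC.posSemidef_iff_eigenvalues_nonneg.mpr fun j => ?_
  have hj : hC.eigenvalues j ∈ ({c} : Set ℝ) - spectrum ℝ H := by
    rw [spectrum.singleton_sub_eq, Algebra.algebraMap_eq_smul_one]
    exact hC.eigenvalues_mem_spectrum_real j
  rw [hH.spectrum_real_eq_range_eigenvalues] at hj
  obtain ⟨_, rfl, _, ⟨i, rfl⟩, hij⟩ := hj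
  simpa [← hij] using h i

theorem IsHermitian.posSemidef_neg_smul_add_smul_one {a b c : ℝ} (hH : H.IsHermitian)
    (h : ∀ i, hH.eigenvalues i ≤ c) (ha : 0 ≤ a) (hb : a * c + b ≤ 0) :
    (-(a • H + b • 1)).PosSemidef := by
  have hdecomp : -(a • H + b • 1) = a • (c • 1 - H) + (-(a * c + b)) • (1 : Matrix n n 𝕜) := by
    module
  rw [hdecomp]
  exact ((hH.posSemidef_smul_one_sub h).smul ha).add (PosSemidef.one.smul (by linarith))

end Matrix

theorem neg_div_add_one_mem_Ioo {x : ℝ} (hx : 0 < x) : -x / (x + 1) ∈ Set.Ioo (-1) 0 := by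
  have hx1 : 0 < x + 1 := by linarith
  constructor
  · rw [lt_div_iff₀ hx1]
    linarith
  · exact div_neg_of_neg_of_pos (by linarith) hx1

theorem one_add_mul_add_nonpos_of_le_neg_div {x ζ : ℝ} (hx : 0 ≤ x) (hζ : ζ ≤ -x / (x + 1)) :
    (1 + ζ) * x + ζ ≤ 0 := by
  rw [le_div_iff₀ (by linarith)] at hζ
  linarith

theorem graduated_concavity_nsd_general {n : ℕ} (H : Matrix (Fin n) (Fin n) ℝ)
    (hH : H.IsHermitian) (lmax : ℝ)
    (h_ge : ∀ i, hH.eigenvalues i ≤ lmax)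
    (hpos : 0 < lmax) :
    (-1 < -lmax / (lmax + 1) ∧ -lmax / (lmax + 1) < 0) ∧
      ∀ ζ : ℝ, -1 ≤ ζ → ζ ≤ -lmax / (lmax + 1) →
        (-((1 + ζ) • H + ζ • (1 : Matrix (Fin n) (Fin n) ℝ))).PosSemidef :=
  ⟨neg_div_add_one_mem_Ioo hpos, fun _ hlow hup =>
    hH.posSemidef_neg_smul_add_smul_one h_ge (by linarith)
      (one_add_mul_add_nonpos_of_le_neg_div hpos.le hup)⟩

/-- Matrix form of Proposition 2: if the largest eigenvalue `lmax` of a real symmetric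
matrix `H` is positive, then `ζ_l = -lmax/(lmax+1) ∈ (-1,0)` and `(1+ζ)•H + ζ•I` is
negative semidefinite (i.e. its negation is positive semidefinite) for every
`ζ ∈ [-1, ζ_l]`. -/
theorem graduated_concavity_nsd {n : ℕ} (H : Matrix (Fin n) (Fin n) ℝ)
    (hH : H.IsHermitian) (lmax : ℝ)
    (h_eig : ∃ i, hH.eigenvalues i = lmax)
    (h_ge : ∀ i, hH.eigenvalues i ≤ lmax)
    (hpos : 0 < lmax) :
    (-1 < -lmax / (lmax + 1) ∧ -lmax / (lmax + 1) < 0) ∧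
      ∀ ζ : ℝ, -1 ≤ ζ → ζ ≤ -lmax / (lmax + 1) →
        (-((1 + ζ) • H + ζ • (1 : Matrix (Fin n) (Fin n) ℝ))).PosSemidef :=
  graduated_concavity_nsd_general H hH lmax h_ge hpos
end

section
/- Let E be the space of M×N real matrices with the Frobenius inner product, and let F : E → ℝ be twice continuously differentiable. Suppose λ > 0 is a real number such that the second derivative of F satisfies D²F(X)(V,V) ≤ λ·‖V‖² for all X and all directions V (λ is an upper bound on the eigenvalues of the Hessian of F). Then for every ζ with −1 ≤ ζ ≤ −λ/(λ + 2), the function X ↦ (1+ζ)·F(X) + ζ·tr(XᵀX) is concave on E; in particular there exists ζ_l ∈ (−1,0) such that this function is concave whenever −1 ≤ ζ ≤ ζ_l. (Proposition 2: graduated concavity yields a concave relaxation, with the Hessian of tr(XᵀX) equal to 2I.) -/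
/-!
The Hessian of `X ↦ tr(XᵀX)` is `2 I`, so the second derivative of `(1 + ζ) F + ζ tr(XᵀX)` in
direction `V` is at most `((1 + ζ) λ + 2 ζ) ‖V‖²`, which is nonpositive exactly when
`ζ ≤ -λ / (λ + 2)`. A C² function whose second directional derivatives are all nonpositive is
concave, since its restriction to every line is.
-/

open Matrix

attribute [local instance] Matrix.frobeniusNormedAddCommGroup Matrix.frobeniusNormedSpace

open Set

section SecondDerivativeTest

variable {E F : Type*} [NormedAddCommGroup E] [NormedSpace ℝ E]
  [NormedAddCommGroup F] [NormedSpace ℝ F]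

theorem ConcaveOn.of_comp_add_smul {V : Type*} [AddCommGroup V] [Module ℝ V] {g : V → ℝ}
    (h : ∀ x v : V, ConcaveOn ℝ univ fun t : ℝ => g (x + t • v)) : ConcaveOn ℝ univ g := by
  refine ⟨convex_univ, fun x _ y _ a b ha hb hab => ?_⟩
  have key := (h x (y - x)).2 (mem_univ 0) (mem_univ 1) ha hb hab
  simp only [smul_eq_mul, mul_zero, mul_one, zero_add, zero_smul, add_zero, one_smul,
    add_sub_cancel] at key
  obtain rfl : a = 1 - b := by linarith
  rwa [show x + b • (y - x) = (1 - b) • x + b • y by module] at key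

theorem hasDerivAt_comp_add_smul {f : E → F} (hf : Differentiable ℝ f) (x v : E) (t : ℝ) :
    HasDerivAt (fun s : ℝ => f (x + s • v)) (fderiv ℝ f (x + t • v) v) t :=
  (hf _).hasFDerivAt.comp_hasDerivAt t <|
    (((hasDerivAt_id t).smul_const v).const_add x).congr_deriv (one_smul ℝ v)

theorem hasDerivAt_deriv_comp_add_smul {f : E → F} (hf : ContDiff ℝ 2 f) (x v : E) (t : ℝ) :
    HasDerivAt (deriv fun s : ℝ => f (x + s • v)) (iteratedFDeriv ℝ 2 f (x + t • v) ![v, v]) t := by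
  have hf' : Differentiable ℝ (fderiv ℝ f) :=
    (hf.fderiv_right one_add_one_eq_two.le).differentiable one_ne_zero
  rw [funext fun s => (hasDerivAt_comp_add_smul (hf.differentiable two_ne_zero) x v s).deriv,
    iteratedFDeriv_two_apply]
  exact ((hasDerivAt_comp_add_smul hf' x v t).clm_apply (hasDerivAt_const t v)).congr_deriv
    (by simp)

theorem concaveOn_univ_of_iteratedFDeriv_two_nonpos {f : E → ℝ} (hf : ContDiff ℝ 2 f)
    (h : ∀ x v, iteratedFDeriv ℝ 2 f x ![v, v] ≤ 0) : ConcaveOn ℝ univ f := by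
  refine ConcaveOn.of_comp_add_smul fun x v => concaveOn_univ_of_deriv2_nonpos
    (fun t => (hasDerivAt_comp_add_smul (hf.differentiable two_ne_zero) x v t).differentiableAt)
    (fun t => (hasDerivAt_deriv_comp_add_smul hf x v t).differentiableAt) fun t => ?_
  rw [Function.iterate_succ_apply', Function.iterate_one,
    (hasDerivAt_deriv_comp_add_smul hf x v t).deriv]
  exact h _ v

end SecondDerivativeTest

section QuadraticForm

variable {𝕜 E F : Type*} [NontriviallyNormedField 𝕜] [NormedAddCommGroup E] [NormedSpace 𝕜 E]
  [NormedAddCommGroup F] [NormedSpace 𝕜 F]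

theorem ContinuousLinearMap.contDiff_diag (B : E →L[𝕜] E →L[𝕜] F) {n : WithTop ℕ∞} :
    ContDiff 𝕜 n fun x => B x x :=
  B.isBoundedBilinearMap.contDiff.comp (contDiff_id.prodMk contDiff_id)

theorem ContinuousLinearMap.fderiv_diag (B : E →L[𝕜] E →L[𝕜] F) :
    fderiv 𝕜 (fun y => B y y) = ⇑(B + B.flip) := by
  ext y z
  have hB : HasFDerivAt (fun y => B y y) _ y :=
    B.hasFDerivAt_of_bilinear (hasFDerivAt_id y) (hasFDerivAt_id y)
  rw [hB.fderiv]
  simp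

theorem ContinuousLinearMap.iteratedFDeriv_two_diag (B : E →L[𝕜] E →L[𝕜] F) (x v w : E) :
    iteratedFDeriv 𝕜 2 (fun y => B y y) x ![v, w] = B v w + B w v := by
  rw [iteratedFDeriv_two_apply, B.fderiv_diag, (B + B.flip).fderiv]
  simp

end QuadraticForm

theorem concaveOn_mul_add_mul_diag_of_iteratedFDeriv_two_le {E : Type*} [NormedAddCommGroup E]
    [NormedSpace ℝ E] {f : E → ℝ} (hf : ContDiff ℝ 2 f) (B : E →L[ℝ] E →L[ℝ] ℝ)
    (hB : ∀ v, 0 ≤ B v v) {lam a b : ℝ}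
    (hbound : ∀ x v, iteratedFDeriv ℝ 2 f x ![v, v] ≤ lam * B v v) (ha : 0 ≤ a)
    (hab : a * lam + 2 * b ≤ 0) :
    ConcaveOn ℝ univ fun x => a * f x + b * B x x := by
  refine concaveOn_univ_of_iteratedFDeriv_two_nonpos
    ((hf.const_smul a).add (B.contDiff_diag.const_smul b)) fun x v => ?_
  have hsecond : iteratedFDeriv ℝ 2 (fun x => a * f x + b * B x x) x ![v, v]
      = a * iteratedFDeriv ℝ 2 f x ![v, v] + b * (2 * B v v) := by
    change iteratedFDeriv ℝ 2 ((fun y => a • f y) + fun y => b • B y y) x ![v, v] = _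
    rw [iteratedFDeriv_add_apply (hf.const_smul a).contDiffAt
        (B.contDiff_diag.const_smul b).contDiffAt, iteratedFDeriv_const_smul_apply' hf.contDiffAt,
      iteratedFDeriv_const_smul_apply' B.contDiff_diag.contDiffAt]
    simp [B.iteratedFDeriv_two_diag, two_mul]
  rw [hsecond]
  calc a * iteratedFDeriv ℝ 2 f x ![v, v] + b * (2 * B v v)
    _ ≤ a * (lam * B v v) + b * (2 * B v v) := by gcongr; exact hbound x v
    _ = (a * lam + 2 * b) * B v v := by ring
    _ ≤ 0 := mul_nonpos_of_nonpos_of_nonneg hab (hB v)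

noncomputable def Matrix.frobeniusForm (m n : Type*) [Fintype m] [Fintype n] :
    Matrix m n ℝ →L[ℝ] Matrix m n ℝ →L[ℝ] ℝ :=
  (LinearMap.mk₂ ℝ (fun X Y : Matrix m n ℝ => (Xᵀ * Y).trace)
    (fun _ _ _ => by simp [Matrix.add_mul]) (fun _ _ _ => by simp)
    (fun _ _ _ => by simp [Matrix.mul_add]) (fun _ _ _ => by simp)).toContinuousBilinearMap

theorem Matrix.trace_transpose_mul_self_nonneg {m n : Type*} [Fintype m] [Fintype n]
    (X : Matrix m n ℝ) : 0 ≤ (Xᵀ * X).trace := by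
  simpa using (posSemidef_conjTranspose_mul_self X).trace_nonneg

/-- Proposition 2: if the Hessian of a C² function `F` on matrices (with the Frobenius
inner product, so `‖V‖² = tr(VᵀV)`) is bounded above by `λ > 0`, then for every
`ζ ∈ [-1, -λ/(λ+2)]` the function `X ↦ (1+ζ)F(X) + ζ tr(XᵀX)` is concave; in particular
there exists `ζ_l ∈ (-1,0)` such that it is concave whenever `-1 ≤ ζ ≤ ζ_l`. -/
theorem graduated_concavity_concave {M N : ℕ}
    (F : Matrix (Fin M) (Fin N) ℝ → ℝ) (hF : ContDiff ℝ 2 F)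
    (lam : ℝ) (hlam : 0 < lam)
    (hbound : ∀ X V : Matrix (Fin M) (Fin N) ℝ,
      iteratedFDeriv ℝ 2 F X ![V, V] ≤ lam * (Vᵀ * V).trace) :
    (∀ ζ : ℝ, -1 ≤ ζ → ζ ≤ -lam / (lam + 2) →
      ConcaveOn ℝ Set.univ (fun X : Matrix (Fin M) (Fin N) ℝ =>
        (1 + ζ) * F X + ζ * (Xᵀ * X).trace)) ∧
    ∃ ζl : ℝ, -1 < ζl ∧ ζl < 0 ∧ ∀ ζ : ℝ, -1 ≤ ζ → ζ ≤ ζl →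
      ConcaveOn ℝ Set.univ (fun X : Matrix (Fin M) (Fin N) ℝ =>
        (1 + ζ) * F X + ζ * (Xᵀ * X).trace) := by
  have hden : 0 < lam + 2 := by linarith
  have concave : ∀ ζ : ℝ, -1 ≤ ζ → ζ ≤ -lam / (lam + 2) →
      ConcaveOn ℝ Set.univ (fun X : Matrix (Fin M) (Fin N) ℝ =>
        (1 + ζ) * F X + ζ * (Xᵀ * X).trace) := fun ζ hζ₁ hζ₂ =>
    concaveOn_mul_add_mul_diag_of_iteratedFDeriv_two_le hF (frobeniusForm _ _)
      trace_transpose_mul_self_nonneg hbound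
      (by linarith) (by rw [le_div_iff₀ hden] at hζ₂; linarith)
  refine ⟨concave, -lam / (lam + 2), ?_, ?_, concave⟩
  · rw [lt_div_iff₀ hden]; linarith
  · exact div_neg_of_neg_of_pos (by linarith) hden
end

section
/- Let M ≤ N be positive integers and let G : ℝ^{M×N} → ℝ be continuous and concave on Ω. Then the minimum of G over Ω is attained at some partial permutation matrix: there exists X̂ ∈ Π such that G(X̂) ≤ G(Y) for all Y ∈ Ω. (Content of Lemma 2: minimizing a concave relaxation over Ω yields a discrete solution in Π.) -/
/-
A concave function on the convex hull of a finite set S attains its minimum at a point of S,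
and Ω is the convex hull of the finite set Π: padding X ∈ Ω with N - M rows that share out
the column deficits 1 - ∑ᵢ Xᵢⱼ equally gives an N × N doubly stochastic matrix, which by
Birkhoff's theorem is a convex combination of permutation matrices; restricting these to the
first M rows writes X as a convex combination of partial permutation matrices.
-/

open Matrix BigOperators

/-- The set Π of M×N partial permutation matrices. -/
def PartialPerm (M N : ℕ) : Set (Matrix (Fin M) (Fin N) ℝ) :=
  {X | (∀ i j, X i j = 0 ∨ X i j = 1) ∧ (∀ i, ∑ j, X i j = 1) ∧ (∀ j, ∑ i, X i j ≤ 1)}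

theorem ConcaveOn.exists_isMinOn_of_subset_convexHull {𝕜 E β : Type*} [Field 𝕜]
    [LinearOrder 𝕜] [IsStrictOrderedRing 𝕜] [AddCommGroup E] [Module 𝕜 E] [AddCommGroup β]
    [LinearOrder β] [IsOrderedAddMonoid β] [Module 𝕜 β] [IsStrictOrderedModule 𝕜 β]
    {s t : Set E} {f : E → β}
    (hf : ConcaveOn 𝕜 t f) (hs : s.Finite) (hs₀ : s.Nonempty) (hst : s ⊆ t)
    (hts : t ⊆ convexHull 𝕜 s) : ∃ x ∈ s, IsMinOn f t x := by
  obtain ⟨x, hx, hx_min⟩ := s.exists_min_image f hs hs₀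
  refine ⟨x, hx, fun y hy => ?_⟩
  obtain ⟨z, hz, hzy⟩ := hf.exists_le_of_mem_convexHull hst (hts hy)
  exact (hx_min z hz).trans hzy

lemma partialPerm_subset_omega (M N : ℕ) : PartialPerm M N ⊆ Omega M N := by
  rintro X ⟨h01, hrow, hcol⟩
  refine ⟨fun i j => ?_, hrow, hcol⟩
  rcases h01 i j with h | h <;> simp [h]

lemma partialPerm_finite (M N : ℕ) : (PartialPerm M N).Finite :=
  (Set.Finite.pi fun _ => Set.Finite.pi fun _ => Set.toFinite {(0 : ℝ), 1}).subset
    fun _ hX i _ j _ => hX.1 i j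

lemma permMatrix_submatrix_castAdd_mem_partialPerm (M K : ℕ) (σ : Equiv.Perm (Fin (M + K))) :
    (σ.permMatrix ℝ).submatrix (Fin.castAdd K) id ∈ PartialPerm M (M + K) := by
  have hσ : σ.permMatrix ℝ ∈ doublyStochastic ℝ (Fin (M + K)) :=
    permMatrix_mem_doublyStochastic
  refine ⟨fun i j => ?_, fun i => sum_row_of_mem_doublyStochastic hσ _, fun j => ?_⟩
  · by_cases h : σ (Fin.castAdd K i) = j <;>
      simp [Equiv.Perm.permMatrix, PEquiv.toMatrix_apply, h]
  · calc ∑ i, σ.permMatrix ℝ (Fin.castAdd K i) j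
        ≤ ∑ i, σ.permMatrix ℝ (Fin.castAdd K i) j +
            ∑ k, σ.permMatrix ℝ (Fin.natAdd M k) j :=
          le_add_of_nonneg_right (Finset.sum_nonneg fun _ _ => nonneg_of_mem_doublyStochastic hσ)
      _ = 1 := (Fin.sum_univ_add fun k => σ.permMatrix ℝ k j).symm.trans
          (sum_col_of_mem_doublyStochastic hσ j)

section Padding

variable {M K : ℕ} {X : Matrix (Fin M) (Fin (M + K)) ℝ}

lemma sum_colDeficit_of_mem_omega (hX : X ∈ Omega M (M + K)) :
    ∑ j, (1 - ∑ i, X i j) = K := by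
  rw [Finset.sum_sub_distrib, Finset.sum_comm, Finset.sum_congr rfl fun i _ => hX.2.1 i]
  simp

lemma colDeficit_nonneg_of_mem_omega (hX : X ∈ Omega M (M + K)) (j : Fin (M + K)) :
    0 ≤ 1 - ∑ i, X i j :=
  sub_nonneg.mpr (hX.2.2 j)

noncomputable def padRows (X : Matrix (Fin M) (Fin (M + K)) ℝ) :
    Matrix (Fin (M + K)) (Fin (M + K)) ℝ :=
  Matrix.of fun k j => Fin.addCases (fun i => X i j) (fun _ => (1 - ∑ i, X i j) / K) k

lemma padRows_submatrix_castAdd (X : Matrix (Fin M) (Fin (M + K)) ℝ) :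
    (padRows X).submatrix (Fin.castAdd K) id = X := by
  ext i j
  simp [padRows]

lemma padRows_mem_doublyStochastic (hX : X ∈ Omega M (M + K)) :
    padRows X ∈ doublyStochastic ℝ (Fin (M + K)) := by
  rw [mem_doublyStochastic_iff_sum]
  refine ⟨fun k j => ?_, fun k => ?_, fun j => ?_⟩
  · refine Fin.addCases (fun i => ?_) (fun _ => ?_) k
    · simpa [padRows] using hX.1 i j
    · simpa [padRows] using div_nonneg (colDeficit_nonneg_of_mem_omega hX j) K.cast_nonneg
  · refine Fin.addCases (fun i => ?_) (fun l => ?_) k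
    · simpa [padRows] using hX.2.1 i
    · have hK : (K : ℝ) ≠ 0 := Nat.cast_ne_zero.mpr (Fin.pos l).ne'
      simp [padRows, ← Finset.sum_div, sum_colDeficit_of_mem_omega hX, hK]
  · -- when `K = 0` every column deficit vanishes, being bounded by their sum `K`
    have hdef : (K : ℝ) = 0 → 1 - ∑ i, X i j = 0 := fun hK =>
      le_antisymm (hK ▸ sum_colDeficit_of_mem_omega hX ▸
        Finset.single_le_sum (fun j _ => colDeficit_nonneg_of_mem_omega hX j) (Finset.mem_univ j))
        (colDeficit_nonneg_of_mem_omega hX j)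
    simp [padRows, Fin.sum_univ_add, mul_div_cancel_of_imp' hdef]

end Padding

lemma omega_subset_convexHull_partialPerm (M K : ℕ) :
    Omega M (M + K) ⊆ convexHull ℝ (PartialPerm M (M + K)) := by
  intro X hX
  have hrestrict : IsLinearMap ℝ fun B : Matrix (Fin (M + K)) (Fin (M + K)) ℝ =>
      B.submatrix (Fin.castAdd K) id :=
    ⟨fun _ _ => rfl, fun _ _ => rfl⟩
  have hpad : padRows X ∈ convexHull ℝ {σ.permMatrix ℝ | σ : Equiv.Perm (Fin (M + K))} := by
    rw [← doublyStochastic_eq_convexHull_permMatrix]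
    exact padRows_mem_doublyStochastic hX
  refine convexHull_mono ?_
    ((hrestrict.image_convexHull _).subset ⟨_, hpad, padRows_submatrix_castAdd X⟩)
  rintro _ ⟨_, ⟨σ, rfl⟩, rfl⟩
  exact permMatrix_submatrix_castAdd_mem_partialPerm M K σ

theorem concave_min_attained_at_partial_perm_general (M N : ℕ) (hMN : M ≤ N)
    (G : Matrix (Fin M) (Fin N) ℝ → ℝ)
    (hconc : ConcaveOn ℝ (Omega M N) G) :
    ∃ X ∈ PartialPerm M N, ∀ Y ∈ Omega M N, G X ≤ G Y := by
  obtain ⟨K, rfl⟩ := Nat.exists_eq_add_of_le hMN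
  obtain ⟨X, hX, hX_min⟩ := hconc.exists_isMinOn_of_subset_convexHull
    (partialPerm_finite M (M + K)) ⟨_, permMatrix_submatrix_castAdd_mem_partialPerm M K 1⟩
    (partialPerm_subset_omega M (M + K)) (omega_subset_convexHull_partialPerm M K)
  exact ⟨X, hX, isMinOn_iff.mp hX_min⟩

/-- Lemma 2: a continuous concave function on Ω attains its minimum over Ω at some
partial permutation matrix. -/
theorem concave_min_attained_at_partial_perm (M N : ℕ) (hM : 0 < M) (hMN : M ≤ N)
    (G : Matrix (Fin M) (Fin N) ℝ → ℝ)
    (hcont : ContinuousOn G (Omega M N))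
    (hconc : ConcaveOn ℝ (Omega M N) G) :
    ∃ X ∈ PartialPerm M N, ∀ Y ∈ Omega M N, G X ≤ G Y :=
  concave_min_attained_at_partial_perm_general M N hMN G hconc
end

section
/- Let M ≤ N be positive integers. The set Ω of doubly sub-stochastic matrices with unit row sums is the convex hull of the set Π of partial permutation matrices: Ω = conv(Π). -/
/-!
Pad `X ∈ Ω` with `N - M` identical rows whose `j`-th entry is `(1 - ∑ i, X i j) / (N - M)`.
The result is an `N × N` doubly stochastic matrix, hence by Birkhoff's theorem a convex
combination of permutation matrices. Keeping only the first `M` rows is linear, and it sends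
permutation matrices to partial permutation matrices.
-/

open Matrix BigOperators

lemma mem_partialPerm_iff {M N : ℕ} {X : Matrix (Fin M) (Fin N) ℝ} :
    X ∈ PartialPerm M N ↔ X ∈ Omega M N ∧ ∀ i j, X i j = 0 ∨ X i j = 1 := by
  constructor
  · rintro ⟨h01, hrow, hcol⟩
    exact ⟨⟨fun i j => by rcases h01 i j with h | h <;> simp [h], hrow, hcol⟩, h01⟩
  · rintro ⟨⟨-, hrow, hcol⟩, h01⟩
    exact ⟨h01, hrow, hcol⟩

lemma convex_omega (M N : ℕ) : Convex ℝ (Omega M N) := by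
  rintro X ⟨hX0, hX1, hX2⟩ Y ⟨hY0, hY1, hY2⟩ a b ha hb hab
  refine ⟨fun i j => ?_, fun i => ?_, fun j => ?_⟩ <;>
    simp only [Matrix.add_apply, Matrix.smul_apply, smul_eq_mul, Finset.sum_add_distrib,
      ← Finset.mul_sum]
  · exact add_nonneg (mul_nonneg ha (hX0 i j)) (mul_nonneg hb (hY0 i j))
  · rw [hX1, hY1]; linarith
  · nlinarith [hX2 j, hY2 j]

lemma submatrix_mem_omega_of_mem_doublyStochastic {M N : ℕ} {A : Matrix (Fin N) (Fin N) ℝ}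
    (hA : A ∈ doublyStochastic ℝ (Fin N)) {f : Fin M → Fin N} (hf : f.Injective) :
    A.submatrix f id ∈ Omega M N := by
  refine ⟨fun i j => nonneg_of_mem_doublyStochastic hA,
    fun i => sum_row_of_mem_doublyStochastic hA (f i), fun j => ?_⟩
  calc ∑ i, A (f i) j = ∑ i ∈ Finset.univ.map ⟨f, hf⟩, A i j :=
        (Finset.sum_map Finset.univ ⟨f, hf⟩ fun i => A i j).symm
    _ ≤ ∑ i, A i j :=
        Finset.sum_le_univ_sum_of_nonneg fun _ => nonneg_of_mem_doublyStochastic hA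
    _ = 1 := sum_col_of_mem_doublyStochastic hA j

lemma submatrix_permMatrix_mem_partialPerm {M N : ℕ} (σ : Equiv.Perm (Fin N))
    {f : Fin M → Fin N} (hf : f.Injective) :
    (σ.permMatrix ℝ).submatrix f id ∈ PartialPerm M N := by
  refine mem_partialPerm_iff.2 ⟨submatrix_mem_omega_of_mem_doublyStochastic
    permMatrix_mem_doublyStochastic hf, fun i j => ?_⟩
  by_cases h : σ (f i) = j <;> simp [Equiv.Perm.permMatrix, PEquiv.toMatrix_apply, h]

lemma submatrix_mem_convexHull_partialPerm {M N : ℕ} {A : Matrix (Fin N) (Fin N) ℝ}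
    (hA : A ∈ doublyStochastic ℝ (Fin N)) {f : Fin M → Fin N} (hf : f.Injective) :
    A.submatrix f id ∈ convexHull ℝ (PartialPerm M N) := by
  have hlin : IsLinearMap ℝ fun B : Matrix (Fin N) (Fin N) ℝ => B.submatrix f id :=
    ⟨fun _ _ => rfl, fun _ _ => rfl⟩
  rw [← SetLike.mem_coe, doublyStochastic_eq_convexHull_permMatrix] at hA
  refine convexHull_mono ?_ (hlin.image_convexHull _ ▸ Set.mem_image_of_mem _ hA)
  rintro _ ⟨_, ⟨σ, rfl⟩, rfl⟩
  exact submatrix_permMatrix_mem_partialPerm σ hf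

lemma mul_div_cancel_of_sum_eq {ι : Type*} [Fintype ι] {d : ι → ℝ} (hd : ∀ j, 0 ≤ d j)
    {k : ℝ} (hsum : ∑ j, d j = k) (j : ι) : k * (d j / k) = d j := by
  rcases eq_or_ne k 0 with rfl | hk
  · simp [(Finset.sum_eq_zero_iff_of_nonneg fun j _ => hd j).1 hsum j]
  · exact mul_div_cancel₀ _ hk

lemma exists_doublyStochastic_submatrix_castAdd_eq {M K : ℕ}
    {X : Matrix (Fin M) (Fin (M + K)) ℝ} (hX : X ∈ Omega M (M + K)) :
    ∃ E ∈ doublyStochastic ℝ (Fin (M + K)), E.submatrix (Fin.castAdd K) id = X := by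
  obtain ⟨hX0, hX1, hX2⟩ := hX
  set d : Fin (M + K) → ℝ := fun j => 1 - ∑ i, X i j
  have hd : ∀ j, 0 ≤ d j := fun j => sub_nonneg.2 (hX2 j)
  have hdsum : ∑ j, d j = K := by
    simp only [d, Finset.sum_sub_distrib]
    rw [Finset.sum_comm]
    simp [hX1]
  refine ⟨of fun i j => Fin.addCases (fun i => X i j) (fun _ => d j / K) i, ?_, by ext; simp⟩
  rw [mem_doublyStochastic_iff_sum]
  refine ⟨fun i j => ?_, fun i => ?_, fun j => ?_⟩
  · refine Fin.addCases (fun i => ?_) (fun i => ?_) i <;> simp [hX0, div_nonneg (hd j)]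
  · refine Fin.addCases (fun i => ?_) (fun i => ?_) i
    · simp [hX1]
    · simp [← Finset.sum_div, hdsum, i.pos.ne']
  · simp [Fin.sum_univ_add, mul_div_cancel_of_sum_eq hd hdsum, d]

theorem omega_eq_convexHull_partialPerm_general (M N : ℕ) (hMN : M ≤ N) :
    Omega M N = convexHull ℝ (PartialPerm M N) := by
  refine (convexHull_min (partialPerm_subset_omega M N) (convex_omega M N)).antisymm' ?_
  obtain ⟨K, rfl⟩ := Nat.exists_eq_add_of_le hMN
  intro X hX
  obtain ⟨E, hE, rfl⟩ := exists_doublyStochastic_submatrix_castAdd_eq hX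
  exact submatrix_mem_convexHull_partialPerm hE (Fin.castAdd_injective M K)

/-- Ω is the convex hull of the set of partial permutation matrices. -/
theorem omega_eq_convexHull_partialPerm (M N : ℕ) (hM : 0 < M) (hMN : M ≤ N) :
    Omega M N = convexHull ℝ (PartialPerm M N) :=
  omega_eq_convexHull_partialPerm_general M N hMN
end
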